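/- Let a_1,…,a_n be positive integers with ∑ a_i = 2b, and let G' be the graph with nodes {w_0,…,w_n} ∪ {v_1,…,v_n} where for each i there is an edge (w_{i-1},w_i) with delay a_i and edges (w_{i-1},v_i),(v_i,w_i) with delay 0, all of capacity 1. Then there exists a feasible flow of rate R = 2 from w_0 to w_n with maximum delay D(f) ≤ b if and only if {a_1,…,a_n} admits a partition into two sets each summing to b; moreover, whenever such a flow exists, every flow-carrying path of the flow has delay exactly b. -/

import Mathlib

/-- A directed network: each edge has a source node, a destination node,
a non-negative integer capacity and a non-negative integer delay. -/
structure Network (V : Type) (E : Type) where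
  src : E → V
  dst : E → V
  cap : E → ℕ
  delay : E → ℕ

namespace Network

variable {V E : Type}

/-- `N.IsPath s t p` : the list of edges `p` forms a directed path from `s` to `t`. -/
def IsPath (N : Network V E) : V → V → List E → Prop
  | s, t, [] => s = t
  | s, t, e :: es => N.src e = s ∧ N.IsPath (N.dst e) t es

/-- The delay of a path: the sum of the delays of its edges. -/
def pathDelay (N : Network V E) (p : List E) : ℕ := (p.map N.delay).sum

end Network

/-- A (path-based) flow from `s` to `t`: a finitely-supported assignment of
non-negative rates to `s`–`t` paths. -/
structure PathFlow {V E : Type} (N : Network V E) (s t : V) where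
  f : List E →₀ ℝ
  nonneg : ∀ p, 0 ≤ f p
  isPath : ∀ p ∈ f.support, N.IsPath s t p

namespace PathFlow

variable {V E : Type} [DecidableEq E] {N : Network V E} {s t : V}

/-- Total rate of the flow. -/
noncomputable def totalRate (F : PathFlow N s t) : ℝ := ∑ p ∈ F.f.support, F.f p

/-- Rate carried by edge `e`: the sum of the rates of all paths containing `e`. -/
noncomputable def edgeRate (F : PathFlow N s t) (e : E) : ℝ :=
  ∑ p ∈ F.f.support, if e ∈ p then F.f p else 0

/-- Feasibility with rate `R`: total rate is `R` and every edge capacity is respected. -/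
def Feasible (F : PathFlow N s t) (R : ℝ) : Prop :=
  F.totalRate = R ∧ ∀ e, F.edgeRate e ≤ (N.cap e : ℝ)

/-- The maximum delay over flow-carrying paths. -/
def maxDelay (F : PathFlow N s t) : ℕ := F.f.support.sup N.pathDelay

/-- An integer flow assigns a non-negative integer rate to every path. -/
def IsInteger (F : PathFlow N s t) : Prop := ∀ p, ∃ m : ℕ, F.f p = (m : ℝ)

end PathFlow
/-- Nodes of the partition-reduction graph `G'`: `Sum.inl i` is `w_i` (`i = 0,…,n`),
`Sum.inr i` is `v_{i+1}` (`i = 0,…,n-1`). -/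
abbrev GV (n : ℕ) := Fin (n + 1) ⊕ Fin n

/-- Edges of `G'`: `Sum.inl i` is the direct edge `(w_i, w_{i+1})` of delay `a i`;
`Sum.inr (Sum.inl i)` is `(w_i, v_{i+1})` and `Sum.inr (Sum.inr i)` is `(v_{i+1}, w_{i+1})`,
both of delay `0`. All edges have capacity `1`. -/
abbrev GE (n : ℕ) := Fin n ⊕ (Fin n ⊕ Fin n)

/-- The graph `G'` reduced from the partition problem. -/
def Gpart (n : ℕ) (a : Fin n → ℕ) : Network (GV n) (GE n) where
  src
    | Sum.inl i => Sum.inl i.castSucc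
    | Sum.inr (Sum.inl i) => Sum.inl i.castSucc
    | Sum.inr (Sum.inr i) => Sum.inr i
  dst
    | Sum.inl i => Sum.inl i.succ
    | Sum.inr (Sum.inl i) => Sum.inr i
    | Sum.inr (Sum.inr i) => Sum.inl i.succ
  cap := fun _ => 1
  delay
    | Sum.inl i => a i
    | Sum.inr _ => 0

/-!
A `w₀`–`wₙ` path of `G'` is determined by the set `S` of indices at which it takes the direct
edge, and its delay is `∑ i ∈ S, a i`. In a feasible flow of rate `2` every detour carries at most
`1`, so every direct edge carries at least `1`; hence the rate-weighted sum of the path delays,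
which equals `∑ i, a i * f(wᵢ, wᵢ₊₁)`, is at least `∑ i, a i = 2 b`. It is also at most
`2 * D(f) ≤ 2 b`, which forces every flow-carrying path to have delay exactly `b`, and such a path
yields the partition. Conversely, the routes of `S` and `Sᶜ` use every edge exactly once, so
rate `1` on each of them is feasible.
-/

namespace Network

variable {V E : Type} {N : Network V E}

theorem IsPath.append {s m t : V} {p q : List E} (hp : N.IsPath s m p) (hq : N.IsPath m t q) :
    N.IsPath s t (p ++ q) := by
  induction p generalizing s with
  | nil => cases hp; exact hq
  | cons e es ih => exact ⟨hp.1, ih hp.2⟩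

theorem pathDelay_append (N : Network V E) (p q : List E) :
    N.pathDelay (p ++ q) = N.pathDelay p + N.pathDelay q := by
  simp [pathDelay]

theorem pathDelay_flatMap {α : Type*} (N : Network V E) (l : List α) (g : α → List E) :
    N.pathDelay (l.flatMap g) = (l.map fun x => N.pathDelay (g x)).sum := by
  induction l with
  | nil => rfl
  | cons x xs ih => rw [List.flatMap_cons, pathDelay_append, ih, List.map_cons, List.sum_cons]

end Network

namespace PathFlow

variable {V E : Type} {N : Network V E} {s t : V}

noncomputable instance [DecidableEq E] : Add (PathFlow N s t) where
  add F G :=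
    { f := F.f + G.f
      nonneg := fun p => add_nonneg (F.nonneg p) (G.nonneg p)
      isPath := fun p hp => (Finset.mem_union.1 (Finsupp.support_add hp)).elim
        (F.isPath p) (G.isPath p) }

noncomputable def ofPath (p : List E) (hp : N.IsPath s t p) : PathFlow N s t where
  f := Finsupp.single p 1
  nonneg := Finsupp.single_nonneg.2 zero_le_one
  isPath q hq := by
    rw [Finset.mem_singleton.1 (Finsupp.support_single_subset hq)]
    exact hp

theorem maxDelay_add_le [DecidableEq E] (F G : PathFlow N s t) :
    (F + G).maxDelay ≤ max F.maxDelay G.maxDelay := by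
  rw [maxDelay, maxDelay, maxDelay, ← Finset.sup_union]
  exact Finset.sup_mono Finsupp.support_add

theorem maxDelay_ofPath (p : List E) (hp : N.IsPath s t p) :
    (ofPath p hp).maxDelay = N.pathDelay p := by
  simp [maxDelay, ofPath]

theorem pathDelay_le_maxDelay (F : PathFlow N s t) {p : List E} (hp : p ∈ F.f.support) :
    N.pathDelay p ≤ F.maxDelay :=
  Finset.le_sup hp

theorem totalRate_eq_sum (F : PathFlow N s t) : F.totalRate = F.f.sum fun _ r => r := rfl

theorem totalRate_ofPath (p : List E) (hp : N.IsPath s t p) : (ofPath p hp).totalRate = 1 := by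
  rw [totalRate_eq_sum]
  exact Finsupp.sum_single_index rfl

theorem pathDelay_eq_of_le_sum_mul (F : PathFlow N s t) {D : ℕ} (hD : F.maxDelay ≤ D)
    (h : F.totalRate * D ≤ ∑ p ∈ F.f.support, F.f p * N.pathDelay p) :
    ∀ p ∈ F.f.support, N.pathDelay p = D := by
  have hle (p) (hp : p ∈ F.f.support) : (N.pathDelay p : ℝ) ≤ D := by
    exact_mod_cast (F.pathDelay_le_maxDelay hp).trans hD
  have hnonneg (p) (hp : p ∈ F.f.support) : 0 ≤ F.f p * (D - N.pathDelay p) :=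
    mul_nonneg (F.nonneg p) (sub_nonneg.2 (hle p hp))
  have hzero : ∑ p ∈ F.f.support, F.f p * (D - N.pathDelay p) = 0 := by
    refine le_antisymm ?_ (Finset.sum_nonneg hnonneg)
    rw [totalRate] at h
    simp only [mul_sub, Finset.sum_sub_distrib, ← Finset.sum_mul]
    linarith
  intro p hp
  rcases mul_eq_zero.1 ((Finset.sum_eq_zero_iff_of_nonneg hnonneg).1 hzero p hp) with h0 | h0
  · exact absurd h0 (Finsupp.mem_support_iff.1 hp)
  · exact_mod_cast (sub_eq_zero.1 h0).symm

variable [DecidableEq E]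

theorem edgeRate_eq_sum (F : PathFlow N s t) (e : E) :
    F.edgeRate e = F.f.sum fun p r => if e ∈ p then r else 0 := rfl

theorem totalRate_add (F G : PathFlow N s t) : (F + G).totalRate = F.totalRate + G.totalRate := by
  simp only [totalRate_eq_sum]
  exact Finsupp.sum_add_index' (fun _ => rfl) fun _ _ _ => rfl

theorem edgeRate_add (F G : PathFlow N s t) (e : E) :
    (F + G).edgeRate e = F.edgeRate e + G.edgeRate e := by
  simp only [edgeRate_eq_sum]
  exact Finsupp.sum_add_index' (fun _ => ite_self 0) fun _ _ _ => by split_ifs <;> simp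

theorem edgeRate_ofPath (p : List E) (hp : N.IsPath s t p) (e : E) :
    (ofPath p hp).edgeRate e = if e ∈ p then 1 else 0 := by
  rw [edgeRate_eq_sum]
  exact Finsupp.sum_single_index (ite_self 0)

end PathFlow

namespace Gpart

variable {n : ℕ} {a : Fin n → ℕ}

def seg (S : Finset (Fin n)) (i : Fin n) : List (GE n) :=
  if i ∈ S then [Sum.inl i] else [Sum.inr (Sum.inl i), Sum.inr (Sum.inr i)]

/-- The route from `w_j` to `w_n` that takes the direct edge `(w_i, w_{i+1})` for `i ∈ S` and
the detour through `v_{i+1}` otherwise. -/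
def routeFrom (S : Finset (Fin n)) (j : Fin (n + 1)) : List (GE n) :=
  ((List.finRange n).drop j).flatMap (seg S)

def route (S : Finset (Fin n)) : List (GE n) :=
  (List.finRange n).flatMap (seg S)

theorem routeFrom_last (S : Finset (Fin n)) : routeFrom S (Fin.last n) = [] := by
  rw [routeFrom, List.drop_eq_nil_of_le (by simp)]
  rfl

theorem routeFrom_castSucc (S : Finset (Fin n)) (i : Fin n) :
    routeFrom S i.castSucc = seg S i ++ routeFrom S i.succ := by
  rw [routeFrom, Fin.val_castSucc, List.drop_eq_getElem_cons (by simp), List.flatMap_cons,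
    List.getElem_finRange]
  rfl

theorem routeFrom_congr {S S' : Finset (Fin n)} (j : Fin (n + 1))
    (h : ∀ i : Fin n, j ≤ i.castSucc → (i ∈ S ↔ i ∈ S')) : routeFrom S j = routeFrom S' j := by
  induction j using Fin.reverseInduction with
  | last => rw [routeFrom_last, routeFrom_last]
  | cast i ih =>
    rw [routeFrom_castSucc, routeFrom_castSucc, seg, seg, if_congr (h i le_rfl) rfl rfl,
      ih fun k hk => h k (Fin.castSucc_lt_succ.le.trans hk)]

theorem src_ne_last (e : GE n) : (Gpart n a).src e ≠ Sum.inl (Fin.last n) := by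
  rcases e with i | i | i <;> simp [Gpart, Fin.castSucc_ne_last]

theorem src_eq_castSucc_iff {e : GE n} {i : Fin n} :
    (Gpart n a).src e = Sum.inl i.castSucc ↔ e = Sum.inl i ∨ e = Sum.inr (Sum.inl i) := by
  rcases e with k | k | k <;> simp [Gpart]

theorem src_eq_inr_iff {e : GE n} {i : Fin n} :
    (Gpart n a).src e = Sum.inr i ↔ e = Sum.inr (Sum.inr i) := by
  rcases e with k | k | k <;> simp [Gpart]

theorem isPath_seg (S : Finset (Fin n)) (i : Fin n) :
    (Gpart n a).IsPath (Sum.inl i.castSucc) (Sum.inl i.succ) (seg S i) := by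
  unfold seg
  split_ifs
  exacts [⟨rfl, rfl⟩, ⟨rfl, rfl, rfl⟩]

theorem isPath_routeFrom (S : Finset (Fin n)) (j : Fin (n + 1)) :
    (Gpart n a).IsPath (Sum.inl j) (Sum.inl (Fin.last n)) (routeFrom S j) := by
  induction j using Fin.reverseInduction with
  | last => rw [routeFrom_last]; rfl
  | cast i ih => rw [routeFrom_castSucc]; exact (isPath_seg S i).append ih

theorem exists_routeFrom_of_isPath (j : Fin (n + 1)) {p : List (GE n)}
    (hp : (Gpart n a).IsPath (Sum.inl j) (Sum.inl (Fin.last n)) p) :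
    ∃ S, p = routeFrom S j := by
  induction j using Fin.reverseInduction generalizing p with
  | last =>
    rcases p with _ | ⟨e, es⟩
    · exact ⟨∅, (routeFrom_last ∅).symm⟩
    · exact absurd hp.1 (src_ne_last e)
  | cast i ih =>
    rcases p with _ | ⟨e, es⟩
    · exact absurd (Sum.inl_injective hp) (Fin.castSucc_ne_last i)
    obtain ⟨he, hes⟩ := hp
    have hlater (k : Fin n) (hk : i.succ ≤ k.castSucc) : k ≠ i :=
      (Fin.succ_le_castSucc_iff.1 hk).ne'
    rcases src_eq_castSucc_iff.1 he with rfl | rfl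
    · obtain ⟨S, rfl⟩ := ih hes
      refine ⟨insert i S, ?_⟩
      rw [routeFrom_castSucc, seg, if_pos (Finset.mem_insert_self i S),
        routeFrom_congr (S := insert i S) (S' := S) i.succ fun k hk => by simp [hlater k hk]]
      rfl
    · rcases es with _ | ⟨e', es⟩
      · exact absurd hes (by simp [Network.IsPath, Gpart])
      obtain ⟨he', hes⟩ := hes
      obtain rfl := src_eq_inr_iff.1 he'
      obtain ⟨S, rfl⟩ := ih hes
      refine ⟨S.erase i, ?_⟩
      rw [routeFrom_castSucc, seg, if_neg (Finset.notMem_erase i S),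
        routeFrom_congr (S := S.erase i) (S' := S) i.succ fun k hk => by simp [hlater k hk]]
      rfl

theorem isPath_iff {p : List (GE n)} :
    (Gpart n a).IsPath (Sum.inl 0) (Sum.inl (Fin.last n)) p ↔ ∃ S, p = route S := by
  constructor
  · exact exists_routeFrom_of_isPath 0
  · rintro ⟨S, rfl⟩
    exact isPath_routeFrom S 0

theorem mem_seg {S : Finset (Fin n)} {i : Fin n} {e : GE n} :
    e ∈ seg S i ↔ i ∈ S ∧ e = Sum.inl i ∨
      i ∉ S ∧ (e = Sum.inr (Sum.inl i) ∨ e = Sum.inr (Sum.inr i)) := by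
  unfold seg
  split_ifs with h <;> simp [h]

variable {S : Finset (Fin n)} {i : Fin n}

theorem inl_mem_route : Sum.inl i ∈ route S ↔ i ∈ S := by
  simp [route, mem_seg]

theorem inr_inl_mem_route : Sum.inr (Sum.inl i) ∈ route S ↔ i ∉ S := by
  simp [route, mem_seg]

theorem inr_inr_mem_route : Sum.inr (Sum.inr i) ∈ route S ↔ i ∉ S := by
  simp [route, mem_seg]

theorem mem_route_compl {e : GE n} : e ∈ route Sᶜ ↔ e ∉ route S := by
  rcases e with k | k | k <;> simp [inl_mem_route, inr_inl_mem_route, inr_inr_mem_route]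

theorem pathDelay_route (S : Finset (Fin n)) : (Gpart n a).pathDelay (route S) = ∑ i ∈ S, a i := by
  have hseg (i : Fin n) : (Gpart n a).pathDelay (seg S i) = if i ∈ S then a i else 0 := by
    unfold seg
    split_ifs <;> rfl
  rw [route, Network.pathDelay_flatMap, List.map_congr_left fun i _ => hseg i, ← Fin.sum_univ_def,
    Finset.sum_ite_mem, Finset.univ_inter]

section Flow

variable (F : PathFlow (Gpart n a) (Sum.inl 0) (Sum.inl (Fin.last n)))

/-- Every route takes exactly one of the two edges leaving `w_i`. -/
theorem edgeRate_inl_add_edgeRate_inr_inl (i : Fin n) :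
    F.edgeRate (Sum.inl i) + F.edgeRate (Sum.inr (Sum.inl i)) = F.totalRate := by
  rw [PathFlow.edgeRate, PathFlow.edgeRate, ← Finset.sum_add_distrib, PathFlow.totalRate]
  refine Finset.sum_congr rfl fun p hp => ?_
  obtain ⟨S, rfl⟩ := isPath_iff.1 (F.isPath p hp)
  by_cases hi : i ∈ S <;> simp [inl_mem_route, inr_inl_mem_route, hi]

theorem sum_mul_pathDelay :
    ∑ p ∈ F.f.support, F.f p * (Gpart n a).pathDelay p =
      ∑ i, (a i : ℝ) * F.edgeRate (Sum.inl i) := by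
  simp only [PathFlow.edgeRate, Finset.mul_sum]
  rw [Finset.sum_comm]
  refine Finset.sum_congr rfl fun p hp => ?_
  obtain ⟨S, rfl⟩ := isPath_iff.1 (F.isPath p hp)
  simp only [pathDelay_route, inl_mem_route, mul_ite, mul_zero, Finset.sum_ite_mem,
    Finset.univ_inter, Nat.cast_sum, Finset.mul_sum]
  exact Finset.sum_congr rfl fun _ _ => mul_comm _ _

theorem pathDelay_eq_of_feasible {b : ℕ} (hsum : ∑ i, a i = 2 * b) (hF : F.Feasible 2)
    (hD : F.maxDelay ≤ b) : ∀ p ∈ F.f.support, (Gpart n a).pathDelay p = b := by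
  obtain ⟨hrate, hcap⟩ := hF
  have hdirect (i : Fin n) : 1 ≤ F.edgeRate (Sum.inl i) := by
    have hcut := edgeRate_inl_add_edgeRate_inr_inl F i
    have hdetour : F.edgeRate (Sum.inr (Sum.inl i)) ≤ 1 := by simpa [Gpart] using hcap _
    linarith
  refine F.pathDelay_eq_of_le_sum_mul hD ?_
  rw [sum_mul_pathDelay, hrate]
  calc (2 : ℝ) * b = ∑ i, (a i : ℝ) * 1 := by simp only [mul_one]; exact_mod_cast hsum.symm
    _ ≤ ∑ i, (a i : ℝ) * F.edgeRate (Sum.inl i) :=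
      Finset.sum_le_sum fun i _ => mul_le_mul_of_nonneg_left (hdirect i) (Nat.cast_nonneg _)

theorem exists_partition_of_feasible {b : ℕ} (hsum : ∑ i, a i = 2 * b) (hF : F.Feasible 2)
    (hD : F.maxDelay ≤ b) : ∃ S : Finset (Fin n), ∑ i ∈ S, a i = b ∧ ∑ i ∈ Sᶜ, a i = b := by
  obtain ⟨p, hp⟩ : F.f.support.Nonempty :=
    Finset.nonempty_of_sum_ne_zero (hF.1.trans_ne two_ne_zero)
  obtain ⟨S, rfl⟩ := isPath_iff.1 (F.isPath p hp)
  have hS : ∑ i ∈ S, a i = b :=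
    pathDelay_route (a := a) S ▸ pathDelay_eq_of_feasible F hsum hF hD _ hp
  exact ⟨S, hS, by have := Finset.sum_add_sum_compl S a; omega⟩

end Flow

noncomputable def partitionFlow (S : Finset (Fin n)) :
    PathFlow (Gpart n a) (Sum.inl 0) (Sum.inl (Fin.last n)) :=
  .ofPath (route S) (isPath_iff.2 ⟨S, rfl⟩) + .ofPath (route Sᶜ) (isPath_iff.2 ⟨Sᶜ, rfl⟩)

theorem partitionFlow_feasible (S : Finset (Fin n)) : (partitionFlow (a := a) S).Feasible 2 := by
  refine ⟨?_, fun e => ?_⟩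
  · rw [partitionFlow, PathFlow.totalRate_add, PathFlow.totalRate_ofPath,
      PathFlow.totalRate_ofPath]
    norm_num
  · rw [partitionFlow, PathFlow.edgeRate_add, PathFlow.edgeRate_ofPath, PathFlow.edgeRate_ofPath]
    by_cases he : e ∈ route S <;> simp [he, mem_route_compl, Gpart]

theorem maxDelay_partitionFlow_le (S : Finset (Fin n)) :
    (partitionFlow (a := a) S).maxDelay ≤ max (∑ i ∈ S, a i) (∑ i ∈ Sᶜ, a i) := by
  refine (PathFlow.maxDelay_add_le _ _).trans ?_
  rw [PathFlow.maxDelay_ofPath, PathFlow.maxDelay_ofPath, pathDelay_route, pathDelay_route]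

end Gpart

theorem gpart_reduction_correct_general (n b : ℕ) (a : Fin n → ℕ) (hsum : ∑ i, a i = 2 * b) :
    ((∃ F : PathFlow (Gpart n a) (Sum.inl 0) (Sum.inl (Fin.last n)),
        F.Feasible 2 ∧ F.maxDelay ≤ b) ↔
      ∃ S : Finset (Fin n), ∑ i ∈ S, a i = b ∧ ∑ i ∈ Sᶜ, a i = b) ∧
    (∀ F : PathFlow (Gpart n a) (Sum.inl 0) (Sum.inl (Fin.last n)),
      F.Feasible 2 → F.maxDelay ≤ b →
      ∀ p ∈ F.f.support, (Gpart n a).pathDelay p = b) := by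
  refine ⟨⟨fun ⟨F, hF, hD⟩ => Gpart.exists_partition_of_feasible F hsum hF hD, ?_⟩,
    fun F hF hD => Gpart.pathDelay_eq_of_feasible F hsum hF hD⟩
  rintro ⟨S, hS, hSc⟩
  refine ⟨Gpart.partitionFlow S, Gpart.partitionFlow_feasible S, ?_⟩
  simpa [hS, hSc] using Gpart.maxDelay_partitionFlow_le (a := a) S

/-- **Full reduction correctness for Theorem 1 (NP-completeness of Min-Max-Delay).**
For `n ≥ 1` and positive integers `a i` summing to `2 b`: there is a feasible flow of rate
`R = 2` from `w₀` to `wₙ` in `G'` with maximum delay `D(f) ≤ b` if and only if the `a i`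
can be partitioned into two sets each summing to `b`; moreover, whenever such a flow
exists, every flow-carrying path of the flow has delay exactly `b`. -/
theorem gpart_reduction_correct (n b : ℕ) (hn : 1 ≤ n) (a : Fin n → ℕ)
    (ha : ∀ i, 0 < a i) (hsum : ∑ i, a i = 2 * b) :
    ((∃ F : PathFlow (Gpart n a) (Sum.inl 0) (Sum.inl (Fin.last n)),
        F.Feasible 2 ∧ F.maxDelay ≤ b) ↔
      ∃ S : Finset (Fin n), ∑ i ∈ S, a i = b ∧ ∑ i ∈ Sᶜ, a i = b) ∧
    (∀ F : PathFlow (Gpart n a) (Sum.inl 0) (Sum.inl (Fin.last n)),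
      F.Feasible 2 → F.maxDelay ≤ b →
      ∀ p ∈ F.f.support, (Gpart n a).pathDelay p = b) :=
  gpart_reduction_correct_general n b a hsum
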